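/- arXiv:2103.13307 — 6 statements merged into one kernel-verified Lean document; each statement's English description precedes it below -/
import Mathlib

section
/- Let u and v be nonzero polynomials with complex coefficients all of which are algebraic over ℚ, and let r be a rational number. Assume the real function s ↦ s^r · u(s)/v(s) is not constant on the set of positive reals where v does not vanish. Then for every transcendental real number t > 0 with v(t) ≠ 0, the number t^r · u(t)/v(t) is transcendental over ℚ. -/
/-!
Suppose `w = t ^ r * u t / v t` were algebraic and write `r = p / q` in lowest terms. Since
`(t ^ r) ^ q = t ^ p`, the transcendental number `t` is a root of
`Q = w ^ q X ^ n v ^ q - X ^ m u ^ q` with `m - n = p`, a polynomial with algebraic coefficients,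
so `Q = 0`. Comparing degrees in `Q = 0` gives `q ∣ p`, hence `q = 1`, and then `Q = 0` says
exactly that `s ^ r * u s / v s = w` for all admissible `s`.
-/

open Polynomial

section AlgebraicCoefficients

variable {K L : Type*} [Field K] [Field L] [Algebra K L]

lemma mem_liftsRing_algebraicClosure_iff {P : L[X]} :
    P ∈ liftsRing (algebraMap (algebraicClosure K L) L) ↔ ∀ i, IsAlgebraic K (P.coeff i) := by
  refine (lifts_iff_liftsRing _ P).symm.trans <|
    (lifts_iff_coeff_lifts P).trans (forall_congr' fun i => ?_)
  exact ⟨fun ⟨x, hx⟩ => hx ▸ mem_algebraicClosure_iff.1 x.2,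
    fun h => ⟨⟨_, mem_algebraicClosure_iff.2 h⟩, rfl⟩⟩

lemma Transcendental.eval_ne_zero_of_mem_liftsRing {z : L} (hz : Transcendental K z) {P : L[X]}
    (hP : P ∈ liftsRing (algebraMap (algebraicClosure K L) L)) (hP0 : P ≠ 0) :
    P.eval z ≠ 0 := by
  obtain ⟨P, rfl⟩ := hP
  refine fun hPz => hz (IsAlgebraic.restrictScalars K ⟨P, fun h => hP0 (by simp [h]), ?_⟩)
  rwa [aeval_def, ← eval_map]

end AlgebraicCoefficients

lemma natCast_dvd_sub_of_C_mul_X_pow_mul_pow_eq {R : Type*} [CommRing R] [IsDomain R]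
    {u v : R[X]} {c : R} {m n q : ℕ} (hu : u ≠ 0) (hv : v ≠ 0)
    (h : C c * X ^ n * v ^ q = X ^ m * u ^ q) : (q : ℤ) ∣ m - n := by
  have hc : c ≠ 0 := by
    rintro rfl
    simp only [map_zero, zero_mul] at h
    exact mul_ne_zero (pow_ne_zero m X_ne_zero) (pow_ne_zero q hu) h.symm
  have hdeg := congrArg natDegree h
  rw [natDegree_mul (by simp [hc]) (pow_ne_zero q hv), natDegree_C_mul_X_pow n c hc,
    natDegree_mul (pow_ne_zero m X_ne_zero) (pow_ne_zero q hu), natDegree_X_pow,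
    natDegree_pow, natDegree_pow] at hdeg
  exact ⟨v.natDegree - u.natDegree, by lia⟩

lemma Rat.den_eq_one_of_den_dvd_num {r : ℚ} (h : (r.den : ℤ) ∣ r.num) : r.den = 1 :=
  r.reduced.symm.eq_one_of_dvd (Int.natCast_dvd.1 h)

lemma Real.rpow_ratCast_pow_den_mul_pow {s : ℝ} (hs : 0 < s) (r : ℚ) {m n : ℕ}
    (hmn : (m : ℤ) - n = r.num) : (s ^ (r : ℝ)) ^ r.den * s ^ n = s ^ m := by
  have hr : (r : ℝ) * r.den = r.num := by exact_mod_cast r.mul_den_eq_num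
  rw [← Real.rpow_mul_natCast hs.le, hr, Real.rpow_intCast, ← zpow_natCast s n,
    ← zpow_natCast s m, ← zpow_add₀ hs.ne']
  congr 1
  lia

lemma eval_C_mul_X_pow_mul_pow_sub_eq_zero_iff (u v : ℂ[X]) {r : ℚ} {m n : ℕ}
    (hmn : (m : ℤ) - n = r.num) {s : ℝ} (hs : 0 < s) (hvs : v.eval (s : ℂ) ≠ 0) (w : ℂ) :
    (C (w ^ r.den) * X ^ n * v ^ r.den - X ^ m * u ^ r.den).eval (s : ℂ) = 0 ↔
      (((s ^ (r : ℝ) : ℝ) : ℂ) * u.eval (s : ℂ) / v.eval (s : ℂ)) ^ r.den = w ^ r.den := by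
  have hpow : ((s ^ (r : ℝ) : ℝ) : ℂ) ^ r.den * (s : ℂ) ^ n = (s : ℂ) ^ m := by
    exact_mod_cast congrArg Complex.ofReal (Real.rpow_ratCast_pow_den_mul_pow hs r hmn)
  have hfactor : (C (w ^ r.den) * X ^ n * v ^ r.den - X ^ m * u ^ r.den).eval (s : ℂ) =
      (s : ℂ) ^ n * v.eval (s : ℂ) ^ r.den *
        (w ^ r.den - (((s ^ (r : ℝ) : ℝ) : ℂ) * u.eval (s : ℂ) / v.eval (s : ℂ)) ^ r.den) := by
    simp only [eval_sub, eval_mul, eval_pow, eval_C, eval_X]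
    have hcancel := mul_inv_cancel₀ (pow_ne_zero r.den hvs)
    linear_combination u.eval (s : ℂ) ^ r.den * hpow +
      (s : ℂ) ^ n * (((s ^ (r : ℝ) : ℝ) : ℂ) * u.eval (s : ℂ)) ^ r.den * hcancel
  have hs0 : (s : ℂ) ≠ 0 := Complex.ofReal_ne_zero.2 hs.ne'
  rw [hfactor, mul_eq_zero_iff_left (mul_ne_zero (pow_ne_zero _ hs0) (pow_ne_zero _ hvs)),
    sub_eq_zero, eq_comm]

/-- A transcendence criterion: if `u, v` are nonzero polynomials with algebraic
complex coefficients, `r` is rational, and `s ↦ s^r · u(s)/v(s)` is not constant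
on the positive reals where `v` does not vanish, then for every transcendental
real `t > 0` with `v(t) ≠ 0`, the number `t^r · u(t)/v(t)` is transcendental. -/
theorem transcendence_criterion (u v : ℂ[X]) (hu : u ≠ 0) (hv : v ≠ 0)
    (hualg : ∀ i, IsAlgebraic ℚ (u.coeff i)) (hvalg : ∀ i, IsAlgebraic ℚ (v.coeff i))
    (r : ℚ)
    (hnc : ¬ ∃ c : ℂ, ∀ s : ℝ, 0 < s → v.eval (s : ℂ) ≠ 0 →
      ((s ^ (r : ℝ) : ℝ) : ℂ) * u.eval (s : ℂ) / v.eval (s : ℂ) = c)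
    (t : ℝ) (ht : Transcendental ℚ t) (ht0 : 0 < t) (hvt : v.eval (t : ℂ) ≠ 0) :
    Transcendental ℚ (((t ^ (r : ℝ) : ℝ) : ℂ) * u.eval (t : ℂ) / v.eval (t : ℂ)) := by
  set w := ((t ^ (r : ℝ) : ℝ) : ℂ) * u.eval (t : ℂ) / v.eval (t : ℂ)
  intro hw
  obtain ⟨m, n, hmn⟩ : ∃ m n : ℕ, (m : ℤ) - n = r.num := ⟨r.num.toNat, (-r.num).toNat, by lia⟩
  set Q := C (w ^ r.den) * X ^ n * v ^ r.den - X ^ m * u ^ r.den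
  have hQ : Q = 0 := by
    set A := liftsRing (algebraMap (algebraicClosure ℚ ℂ) ℂ)
    have hC : C (w ^ r.den) ∈ A := (lifts_iff_liftsRing _ _).1 <|
      C_mem_lifts _ (⟨_, mem_algebraicClosure_iff.2 (hw.pow _)⟩ : algebraicClosure ℚ ℂ)
    have hX : X ∈ A := (lifts_iff_liftsRing _ _).1 (X_mem_lifts _)
    have hQA : Q ∈ A := sub_mem
      (mul_mem (mul_mem hC (pow_mem hX n)) (pow_mem (mem_liftsRing_algebraicClosure_iff.2 hvalg) _))
      (mul_mem (pow_mem hX m) (pow_mem (mem_liftsRing_algebraicClosure_iff.2 hualg) _))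
    have htC : Transcendental ℚ (t : ℂ) :=
      (transcendental_algebraMap_iff Complex.ofReal_injective).2 ht
    by_contra hQ0
    exact htC.eval_ne_zero_of_mem_liftsRing hQA hQ0 <|
      (eval_C_mul_X_pow_mul_pow_sub_eq_zero_iff u v hmn ht0 hvt w).2 rfl
  have hden : r.den = 1 := Rat.den_eq_one_of_den_dvd_num <|
    hmn ▸ natCast_dvd_sub_of_C_mul_X_pow_mul_pow_eq hu hv (sub_eq_zero.1 hQ)
  refine hnc ⟨w, fun s hs hvs => ?_⟩
  have hQs : Q.eval (s : ℂ) = 0 := by rw [hQ, eval_zero]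
  simpa [hden] using (eval_C_mul_X_pow_mul_pow_sub_eq_zero_iff u v hmn hs hvs w).1 hQs
end

section
/- For all integers h, k with 1 ≤ h < k, the sum ∑_{n=h}^{k} C(k, n) · C(n-1, h-1) · (-n)^{k-n} · n^{n-h} equals 0 in ℤ. -/
open Finset Polynomial fwdDiff

private lemma fwdDiff_iter_zero_fun (k : ℕ) :
    (fwdDiff (1:ℕ))^[k] (fun _ : ℕ ↦ (0 : ℚ)) = fun _ ↦ 0 :=
  Function.iterate_fixed (fwdDiff_const 1 (0 : ℚ)) k

private lemma fwdDiff_poly_eval (p : ℚ[X]) :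
    fwdDiff (1:ℕ) (fun n : ℕ ↦ p.eval (n : ℚ)) = fun n : ℕ ↦ (p.comp (X + 1) - p).eval (n : ℚ) := by
  funext n
  simp only [fwdDiff, eval_sub, eval_comp, eval_add, eval_X, eval_one]
  push_cast
  ring_nf

private lemma fwdDiff_iter_poly (k : ℕ) (p : ℚ[X]) (hp : p.natDegree < k) :
    (fwdDiff (1:ℕ))^[k] (fun n : ℕ ↦ p.eval (n : ℚ)) = fun _ ↦ 0 := by
  induction k generalizing p with
  | zero => omega
  | succ k IH =>
    rw [Function.iterate_succ_apply, fwdDiff_poly_eval]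
    set q : ℚ[X] := p.comp (X + 1) - p with hq
    by_cases hq0 : q = 0
    · rw [hq0]
      simpa using fwdDiff_iter_zero_fun k
    · apply IH
      have hp0 : p ≠ 0 := by
        rintro rfl
        simp [hq] at hq0
      have hX1 : (X + 1 : ℚ[X]).natDegree = 1 := by
        simpa using natDegree_X_add_C (1 : ℚ)
      have hXne : (X + 1 : ℚ[X]).natDegree ≠ 0 := by omega
      have hlc : (p.comp (X + 1)).leadingCoeff = p.leadingCoeff := by
        rw [leadingCoeff_comp hXne]
        have : (X + 1 : ℚ[X]).leadingCoeff = 1 := by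
          simpa using leadingCoeff_X_add_C (1 : ℚ)
        simp [this]
      have hcomp0 : p.comp (X + 1) ≠ 0 := by
        intro hc
        apply hp0
        rw [← leadingCoeff_eq_zero, ← hlc, hc, leadingCoeff_zero]
      have hdeg : (p.comp (X + 1)).degree = p.degree := by
        rw [degree_eq_natDegree hcomp0, degree_eq_natDegree hp0, natDegree_comp, hX1, mul_one]
      have hlt : q.natDegree < p.natDegree :=
        natDegree_lt_natDegree hq0 (hdeg ▸ degree_sub_lt hdeg hcomp0 hlc)
      omega

/-- Orthogonality relation: for `1 ≤ h < k`,
`∑_{n=h}^{k} C(k,n) · C(n-1,h-1) · (-n)^{k-n} · n^{n-h} = 0` in `ℤ`. -/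
theorem orthogonality_sum_eq_zero (h k : ℕ) (h1 : 1 ≤ h) (hk : h < k) :
    ∑ n ∈ Finset.Icc h k,
      (k.choose n : ℤ) * ((n - 1).choose (h - 1) : ℤ) *
        (-(n : ℤ)) ^ (k - n) * (n : ℤ) ^ (n - h) = 0 := by
  have hkh : h ≤ k := hk.le
  have hkh1 : 1 ≤ k - h := by omega
  -- the polynomial of degree k-1
  set P : ℚ[X] := Polynomial.C (((h - 1).factorial : ℚ)⁻¹) *
      (descPochhammer ℚ (h - 1)).comp (X - 1) * X ^ (k - h) with hP
  have hfac : ((h - 1).factorial : ℚ) ≠ 0 := by exact_mod_cast (h - 1).factorial_ne_zero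
  have hPeval : ∀ n : ℕ, P.eval (n : ℚ) = ((n - 1).choose (h - 1) : ℚ) * (n : ℚ) ^ (k - h) := by
    intro n
    cases n with
    | zero =>
      simp [hP, zero_pow (by omega : k - h ≠ 0)]
    | succ m =>
      have : ((m + 1 : ℕ) : ℚ) - 1 = (m : ℚ) := by push_cast; ring
      simp only [hP, eval_mul, eval_pow, eval_comp, eval_sub, eval_X, eval_one, eval_C, this,
        descPochhammer_eval_eq_descFactorial ℚ m (h - 1),
        Nat.descFactorial_eq_factorial_mul_choose]
      rw [Nat.add_sub_cancel]
      push_cast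
      field_simp
  have hPdeg : P.natDegree < k := by
    have h1' : (Polynomial.C (((h - 1).factorial : ℚ)⁻¹) *
        (descPochhammer ℚ (h - 1)).comp (X - 1)).natDegree ≤ h - 1 := by
      refine (natDegree_mul_le).trans ?_
      have hXs : ((X : ℚ[X]) - 1).natDegree = 1 := by simpa using natDegree_X_sub_C (1 : ℚ)
      simp [natDegree_comp, hXs]
    calc P.natDegree ≤ _ + (X ^ (k - h) : ℚ[X]).natDegree := natDegree_mul_le
      _ ≤ (h - 1) + (k - h) := by
          gcongr
          simp
      _ < k := by omega
  -- key vanishing from the forward difference formula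
  have key : ∑ n ∈ range (k + 1),
      ((-1 : ℤ) ^ (k - n) * (k.choose n : ℤ)) • (P.eval (n : ℚ)) = 0 := by
    have := fwdDiff_iter_eq_sum_shift (1 : ℕ) (fun n : ℕ ↦ P.eval (n : ℚ)) k 0
    simp only [fwdDiff_iter_poly k P hPdeg, smul_eq_mul, nsmul_eq_mul, mul_one, zero_add] at this
    exact this.symm
  -- rewrite terms of the original sum
  have step1 : ∑ n ∈ Finset.Icc h k,
      (k.choose n : ℤ) * ((n - 1).choose (h - 1) : ℤ) *
        (-(n : ℤ)) ^ (k - n) * (n : ℤ) ^ (n - h)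
      = ∑ n ∈ Finset.Icc h k,
        ((-1 : ℤ) ^ (k - n) * (k.choose n : ℤ)) *
          (((n - 1).choose (h - 1) : ℤ) * (n : ℤ) ^ (k - h)) := by
    refine Finset.sum_congr rfl fun n hn ↦ ?_
    rw [Finset.mem_Icc] at hn
    rw [neg_pow, show (n : ℤ) ^ (k - h) = (n : ℤ) ^ (k - n) * (n : ℤ) ^ (n - h) by
      rw [← pow_add]; congr 1; omega]
    ring
  have step2 : ∑ n ∈ Finset.Icc h k,
        ((-1 : ℤ) ^ (k - n) * (k.choose n : ℤ)) *
          (((n - 1).choose (h - 1) : ℤ) * (n : ℤ) ^ (k - h))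
      = ∑ n ∈ range (k + 1),
        ((-1 : ℤ) ^ (k - n) * (k.choose n : ℤ)) *
          (((n - 1).choose (h - 1) : ℤ) * (n : ℤ) ^ (k - h)) := by
    refine Finset.sum_subset (fun n hn ↦ ?_) (fun n hn hn' ↦ ?_)
    · rw [Finset.mem_Icc] at hn; rw [Finset.mem_range]; omega
    · rw [Finset.mem_range] at hn
      rw [Finset.mem_Icc] at hn'
      have hnh : n < h := by omega
      rcases Nat.eq_zero_or_pos n with rfl | hn0
      · simp [zero_pow (by omega : k - h ≠ 0)]
      · rw [Nat.choose_eq_zero_of_lt (by omega : n - 1 < h - 1)]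
        ring
  rw [step1, step2]
  have key2 : ∑ n ∈ range (k + 1),
      ((-1 : ℚ) ^ (k - n) * (k.choose n : ℚ)) *
        (((n - 1).choose (h - 1) : ℚ) * (n : ℚ) ^ (k - h)) = 0 := by
    rw [← key]
    refine Finset.sum_congr rfl fun n _ ↦ ?_
    rw [hPeval n]
    push_cast [zsmul_eq_mul]
    ring
  exact_mod_cast key2
end

section
/- Let u, v : ℕ → ℝ be two sequences with u(0) = v(0). Then the following are equivalent: (i) for every k ≥ 1, v(k) = ∑_{n=1}^{k} C(k, n) · (-n)^{k-n} · u(n); (ii) for every n ≥ 1, u(n) = ∑_{h=1}^{n} C(n-1, h-1) · n^{n-h} · v(h). -/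
/-!
Both relations are given by lower unitriangular matrices, `A k n = C(k, n) (-n)^(k-n)` and
`B n h = C(n-1, h-1) n^(n-h)`. Multiplying the entry `(B A) n m` by `n` and using
`n C(n-1, h-1) C(h, m) = C(n, m) h C(n-m, h-m)` turns it into
`C(n, m) ∑ⱼ (m + j) C(d, j) (-m)^j n^(d-j)` with `d = n - m`; the binomial theorem evaluates this
to `C(n, m) m (d^d - d d^(d-1))`, which is `n` if `d = 0` and `0` otherwise. Hence `B A = 1`, which
is (i) ⇒ (ii); conversely, `B` is unitriangular, hence injective, and `B v = u = B (A u)`.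
-/

open Finset

section Binomial

variable {R : Type*} [CommSemiring R]

theorem sum_range_natCast_mul_choose_mul_pow (x y : R) (d : ℕ) :
    ∑ j ∈ range (d + 1), (j : R) * d.choose j * x ^ j * y ^ (d - j) =
      d * x * (x + y) ^ (d - 1) := by
  cases d with
  | zero => simp
  | succ e =>
    rw [sum_range_succ', add_tsub_cancel_right, add_pow, mul_sum]
    simp only [Nat.cast_zero, zero_mul, add_zero]
    refine sum_congr rfl fun j _ => ?_
    have hchoose : ((e + 1 : ℕ) : R) * e.choose j = (e + 1).choose (j + 1) * (j + 1 : ℕ) := by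
      rw [← Nat.cast_mul, ← Nat.cast_mul, Nat.add_one_mul_choose_eq]
    calc ((j + 1 : ℕ) : R) * (e + 1).choose (j + 1) * x ^ (j + 1) * y ^ (e + 1 - (j + 1))
        = ((e + 1).choose (j + 1) * (j + 1 : ℕ)) * x ^ (j + 1) * y ^ (e - j) := by
          rw [Nat.add_sub_add_right]; ring
      _ = _ := by rw [← hchoose]; ring

theorem sum_range_add_mul_choose_mul_pow (a x y : R) (d : ℕ) :
    ∑ j ∈ range (d + 1), (a + j) * d.choose j * x ^ j * y ^ (d - j) =
      a * (x + y) ^ d + d * x * (x + y) ^ (d - 1) := by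
  simp only [add_mul, sum_add_distrib, sum_range_natCast_mul_choose_mul_pow, add_pow, mul_sum]
  congr 1
  exact sum_congr rfl fun j _ => by ring

end Binomial

section Associated

variable {R : Type*} [CommRing R]

def associatedCoeff (k n : ℕ) : R := k.choose n * (-(n : R)) ^ (k - n)

def associatedInvCoeff (n h : ℕ) : R := (n - 1).choose (h - 1) * (n : R) ^ (n - h)

theorem associatedInvCoeff_self (n : ℕ) : (associatedInvCoeff n n : R) = 1 := by
  simp [associatedInvCoeff]

theorem natCast_mul_associatedInvCoeff_mul_associatedCoeff {m : ℕ} (hm : 1 ≤ m) (d j : ℕ) :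
    ((m + d : ℕ) : R) * (associatedInvCoeff (m + d) (m + j) * associatedCoeff (m + j) m) =
      (m + d).choose m * ((m + j) * d.choose j * (-(m : R)) ^ j * (m + d) ^ (d - j)) := by
  have hpascal : (m + d) * (m + d - 1).choose (m + j - 1) = (m + d).choose (m + j) * (m + j) := by
    obtain ⟨a, rfl⟩ := Nat.exists_eq_add_of_le' hm
    simpa [add_right_comm] using Nat.add_one_mul_choose_eq (a + d) (a + j)
  have hchoose_mul : (m + d).choose (m + j) * (m + j).choose m = (m + d).choose m * d.choose j := by
    simpa using Nat.choose_mul (n := m + d) (k := m + j) (s := m) (by omega)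
  have hcoeff : (m + d) * (m + d - 1).choose (m + j - 1) * (m + j).choose m =
      (m + d).choose m * (m + j) * d.choose j := by
    rw [hpascal, mul_right_comm, hchoose_mul]; ring
  have hcoeff' := congrArg (Nat.cast (R := R)) hcoeff
  push_cast at hcoeff'
  simp only [associatedInvCoeff, associatedCoeff, Nat.add_sub_add_left, add_tsub_cancel_left]
  push_cast
  linear_combination ((-(m : R)) ^ j * ((m : R) + d) ^ (d - j)) * hcoeff'

end Associated

theorem eq_of_forall_sum_Icc_mul_eq {R : Type*} [Ring R] {c : ℕ → ℕ → R} (hc : ∀ n, c n n = 1)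
    {v w : ℕ → R} (h : ∀ n, 1 ≤ n → ∑ i ∈ Icc 1 n, c n i * v i = ∑ i ∈ Icc 1 n, c n i * w i) :
    ∀ n, 1 ≤ n → v n = w n := by
  intro n
  induction n using Nat.strong_induction_on with
  | _ n ih =>
    intro hn
    obtain ⟨k, rfl⟩ := Nat.exists_eq_add_of_le' hn
    have hlower : ∑ i ∈ Icc 1 k, c (k + 1) i * v i = ∑ i ∈ Icc 1 k, c (k + 1) i * w i :=
      sum_congr rfl fun i hi => by
        rw [ih i (Nat.lt_succ_of_le (mem_Icc.1 hi).2) (mem_Icc.1 hi).1]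
    have htop := h (k + 1) hn
    rw [sum_Icc_succ_top hn, sum_Icc_succ_top hn, hlower, hc, one_mul, one_mul] at htop
    exact add_left_cancel htop

section Inversion

variable {R : Type*} [CommRing R] [IsDomain R] [CharZero R]

theorem sum_associatedInvCoeff_mul_associatedCoeff {m : ℕ} (hm : 1 ≤ m) (n : ℕ) :
    ∑ h ∈ Icc m n, (associatedInvCoeff n h : R) * associatedCoeff h m =
      if n = m then 1 else 0 := by
  rcases lt_or_ge n m with hnm | hmn
  · simp [Icc_eq_empty_of_lt hnm, hnm.ne]
  obtain ⟨d, rfl⟩ := Nat.exists_eq_add_of_le hmn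
  have hn : ((m + d : ℕ) : R) ≠ 0 := Nat.cast_ne_zero.2 (by omega)
  refine mul_left_cancel₀ hn ?_
  calc ((m + d : ℕ) : R) * ∑ h ∈ Icc m (m + d), associatedInvCoeff (m + d) h * associatedCoeff h m
      = ∑ j ∈ range (d + 1), ((m + d : ℕ) : R) *
          (associatedInvCoeff (m + d) (m + j) * associatedCoeff (m + j) m) := by
        rw [mul_sum, ← Ico_add_one_right_eq_Icc, sum_Ico_eq_sum_range, add_assoc,
          add_tsub_cancel_left]
    _ = (m + d).choose m * (m * (d : R) ^ d + d * (-(m : R)) * (d : R) ^ (d - 1)) := by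
        rw [sum_congr rfl fun j _ => natCast_mul_associatedInvCoeff_mul_associatedCoeff hm d j,
          ← mul_sum, sum_range_add_mul_choose_mul_pow, neg_add_cancel_left]
    _ = ((m + d : ℕ) : R) * if m + d = m then 1 else 0 := by
        cases d with
        | zero => simp
        | succ e =>
          rw [if_neg (by omega), add_tsub_cancel_right, pow_succ]
          ring

theorem sum_associatedInvCoeff_mul_sum_associatedCoeff_mul (u : ℕ → R) {n : ℕ} (hn : 1 ≤ n) :
    ∑ h ∈ Icc 1 n, associatedInvCoeff n h * ∑ m ∈ Icc 1 h, associatedCoeff h m * u m = u n := by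
  have hswap : ∀ h m, h ∈ Icc 1 n ∧ m ∈ Icc 1 h ↔ h ∈ Icc m n ∧ m ∈ Icc 1 n :=
    fun h m => by simp only [mem_Icc]; omega
  calc ∑ h ∈ Icc 1 n, associatedInvCoeff n h * ∑ m ∈ Icc 1 h, associatedCoeff h m * u m
      = ∑ m ∈ Icc 1 n, (∑ h ∈ Icc m n, associatedInvCoeff n h * associatedCoeff h m) * u m := by
        simp_rw [mul_sum, sum_mul, mul_assoc]
        exact sum_comm' hswap
    _ = ∑ m ∈ Icc 1 n, (if n = m then 1 else 0) * u m :=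
        sum_congr rfl fun m hm => by
          rw [sum_associatedInvCoeff_mul_associatedCoeff (mem_Icc.1 hm).1]
    _ = u n := by simp [hn]

end Inversion

theorem associated_series_inversion_general (u v : ℕ → ℝ) :
    (∀ k : ℕ, 1 ≤ k →
        v k = ∑ n ∈ Finset.Icc 1 k, (k.choose n : ℝ) * (-(n : ℝ)) ^ (k - n) * u n)
      ↔
    (∀ n : ℕ, 1 ≤ n →
        u n = ∑ h ∈ Finset.Icc 1 n,
          ((n - 1).choose (h - 1) : ℝ) * (n : ℝ) ^ (n - h) * v h) := by
  constructor
  · intro hv n hn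
    rw [← sum_associatedInvCoeff_mul_sum_associatedCoeff_mul u hn]
    exact sum_congr rfl fun h hh => by rw [hv h (mem_Icc.1 hh).1]; rfl
  · intro hu
    refine eq_of_forall_sum_Icc_mul_eq associatedInvCoeff_self fun n hn => ?_
    exact (hu n hn).symm.trans (sum_associatedInvCoeff_mul_sum_associatedCoeff_mul u hn).symm

/-- The mutually inverse relations between the coefficients `u n` of a power
series `H(x) = ∑ u_n x^n/n!` and the coefficients `v k` of its associated
series `G(t) = H(t e^{-t}) = ∑ v_k t^k/k!`. -/
theorem associated_series_inversion (u v : ℕ → ℝ) (h0 : u 0 = v 0) :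
    (∀ k : ℕ, 1 ≤ k →
        v k = ∑ n ∈ Finset.Icc 1 k, (k.choose n : ℝ) * (-(n : ℝ)) ^ (k - n) * u n)
      ↔
    (∀ n : ℕ, 1 ≤ n →
        u n = ∑ h ∈ Finset.Icc 1 n,
          ((n - 1).choose (h - 1) : ℝ) * (n : ℝ) ^ (n - h) * v h) :=
  associated_series_inversion_general u v
end

section
/- Let y > 0 be a real number and k an integer. Then the series ∑_{n=0}^∞ (y+n)^{n-k} x^n / n! converges (is summable) for every real x with |x| < 1/e, and fails to be summable for every real x with |x| > 1/e; that is, the power series T_k(x,y) = ∑_{n=0}^∞ (y+n)^{n-k} x^n/n! has radius of convergence exactly 1/e. -/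
/-!
Ratio test. For `y + n > 0` consecutive terms satisfy
`T (n+1) = T n * x * (1 + 1/(y+n))^(n-k) * (y+n+1)/(n+1)`, and the factor
`(1 + 1/(y+n))^(n-k)` tends to `e`, so `|T (n+1)| / |T n| → e |x|`.
-/

open Filter Topology Real Nat

noncomputable def kolbergTerm (y : ℝ) (k : ℤ) (x : ℝ) (n : ℕ) : ℝ :=
  (y + n) ^ ((n : ℤ) - k) * x ^ n / n !

lemma tendsto_add_natCast_atTop (y : ℝ) : Tendsto (fun n : ℕ => y + n) atTop atTop :=
  tendsto_atTop_add_const_left atTop y tendsto_natCast_atTop_atTop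

lemma eventually_pos_add_natCast (y : ℝ) : ∀ᶠ n : ℕ in atTop, 0 < y + n :=
  (tendsto_add_natCast_atTop y).eventually_gt_atTop 0

lemma kolbergTerm_ne_zero {y : ℝ} (k : ℤ) {x : ℝ} {n : ℕ} (hx : x ≠ 0) (hn : y + n ≠ 0) :
    kolbergTerm y k x n ≠ 0 := by
  unfold kolbergTerm
  positivity

lemma kolbergTerm_succ {y : ℝ} (k : ℤ) (x : ℝ) {n : ℕ} (hn : 0 < y + n) :
    kolbergTerm y k x (n + 1) =
      kolbergTerm y k x n * (x * (1 + (y + n)⁻¹) ^ ((n : ℤ) - k) * ((y + n + 1) / (n + 1))) := by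
  have hbase : y + ↑(n + 1) = (1 + (y + n)⁻¹) * (y + n) := by
    push_cast; field_simp; ring
  have hexp : ((n + 1 : ℕ) : ℤ) - k = ((n : ℤ) - k) + 1 := by push_cast; ring
  unfold kolbergTerm
  rw [hexp, zpow_add_one₀ (by rw [hbase]; positivity), hbase, mul_zpow, factorial_succ]
  push_cast
  field_simp
  ring

lemma tendsto_one_add_inv_zpow_sub (y : ℝ) (k : ℤ) :
    Tendsto (fun n : ℕ => (1 + (y + n)⁻¹) ^ ((n : ℤ) - k)) atTop (𝓝 (exp 1)) := by
  have hpow : Tendsto (fun n : ℕ => (1 + (y + n)⁻¹) ^ n) atTop (𝓝 (exp 1)) := by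
    refine tendsto_one_add_pow_exp_of_tendsto ((tendsto_natCast_div_add_atTop y).congr fun n => ?_)
    rw [add_comm, div_eq_mul_inv]
  have hbase : Tendsto (fun n : ℕ => 1 + (y + n)⁻¹) atTop (𝓝 1) := by
    simpa using tendsto_const_nhds.add (tendsto_inv_atTop_zero.comp (tendsto_add_natCast_atTop y))
  have hk := hbase.zpow₀ k (.inl one_ne_zero)
  rw [one_zpow] at hk
  rw [← div_one (exp 1)]
  refine (hpow.div hk one_ne_zero).congr' ?_
  filter_upwards [eventually_pos_add_natCast y] with n hn
  rw [Pi.div_apply, zpow_sub₀ (by positivity), zpow_natCast]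

lemma tendsto_norm_kolbergTerm_ratio (y : ℝ) (k : ℤ) {x : ℝ} (hx : x ≠ 0) :
    Tendsto (fun n => ‖kolbergTerm y k x (n + 1)‖ / ‖kolbergTerm y k x n‖) atTop
      (𝓝 (exp 1 * |x|)) := by
  have hfrac : Tendsto (fun n : ℕ => (y + n + 1) / (n + 1)) atTop (𝓝 1) := by
    have := tendsto_add_mul_div_add_mul_atTop_nhds (y + 1) 1 (1 : ℝ) one_ne_zero
    rw [div_one] at this
    exact this.congr fun n => by ring
  have := ((tendsto_const_nhds (x := x)).mul (tendsto_one_add_inv_zpow_sub y k)).mul hfrac |>.norm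
  rw [mul_one, norm_mul, norm_eq_abs, norm_of_nonneg (exp_pos 1).le, mul_comm] at this
  refine this.congr' ?_
  filter_upwards [eventually_pos_add_natCast y] with n hn
  rw [kolbergTerm_succ k x hn, norm_mul (kolbergTerm y k x n),
    mul_div_cancel_left₀ _ (norm_ne_zero_iff.2 (kolbergTerm_ne_zero k hx hn.ne'))]

theorem kolberg_series_radius_general (y : ℝ) (k : ℤ) :
    (∀ x : ℝ, |x| < 1 / Real.exp 1 →
        Summable (fun n : ℕ =>
          (y + n) ^ ((n : ℤ) - k) * x ^ n / (Nat.factorial n : ℝ)))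
    ∧ (∀ x : ℝ, 1 / Real.exp 1 < |x| →
        ¬ Summable (fun n : ℕ =>
          (y + n) ^ ((n : ℤ) - k) * x ^ n / (Nat.factorial n : ℝ))) := by
  refine ⟨fun x hx => show Summable (kolbergTerm y k x) from ?_,
    fun x hx => show ¬Summable (kolbergTerm y k x) from ?_⟩
  · rcases eq_or_ne x 0 with rfl | hx0
    · exact (hasSum_single 0 fun n hn => by simp [kolbergTerm, hn]).summable
    refine summable_of_ratio_test_tendsto_lt_one ?_ ?_ (tendsto_norm_kolbergTerm_ratio y k hx0)
    · rwa [lt_div_iff₀ (exp_pos 1), mul_comm] at hx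
    · filter_upwards [eventually_pos_add_natCast y] with n hn
      exact kolbergTerm_ne_zero k hx0 hn.ne'
  · have hx0 : x ≠ 0 := abs_pos.1 ((by positivity : (0 : ℝ) < 1 / exp 1).trans hx)
    refine not_summable_of_ratio_test_tendsto_gt_one ?_ (tendsto_norm_kolbergTerm_ratio y k hx0)
    rwa [div_lt_iff₀ (exp_pos 1), mul_comm] at hx

/-- The power series `T_k(x,y) = ∑ (y+n)^{n-k} x^n/n!` (with `y > 0`, `k : ℤ`)
is summable for `|x| < 1/e` and not summable for `|x| > 1/e`: its radius of
convergence is exactly `1/e`. -/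
theorem kolberg_series_radius (y : ℝ) (hy : 0 < y) (k : ℤ) :
    (∀ x : ℝ, |x| < 1 / Real.exp 1 →
        Summable (fun n : ℕ =>
          (y + n) ^ ((n : ℤ) - k) * x ^ n / (Nat.factorial n : ℝ)))
    ∧ (∀ x : ℝ, 1 / Real.exp 1 < |x| →
        ¬ Summable (fun n : ℕ =>
          (y + n) ^ ((n : ℤ) - k) * x ^ n / (Nat.factorial n : ℝ))) :=
  kolberg_series_radius_general y k
end

section
/- For every real number t with 0 ≤ t < 1, one has ∑_{n=1}^∞ n^{n-1} · (t·e^{-t})^n / n! = t. -/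
/-!
Write `T(x) = ∑_{n ≥ 1} n^{n-1} x^n / n!` (`treeFunction`, reindexed from `0`). For small `|t|`,
expanding every `e^{-nt}` in `T(t e^{-t})` gives an absolutely convergent double series. Summing it
along antidiagonals, the coefficient of `t^{M+1}` for `M ≥ 1` is a multiple of the `(M+1)`-st
forward difference of `j ↦ j^M`, which vanishes; so `T(t e^{-t}) = t` near `0`. The coefficients
of `T` grow at most like `e^n`, and `|t e^{-t}| < e^{-1}` on an interval `(-δ, 1)`, so both sides
are analytic there and the identity theorem carries the equality over to `[0, 1)`.
-/

open Finset Filter Topology Real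
open scoped Nat NNReal

-- The left side is the `(M+1)`-st forward difference of `j ↦ j ^ M` at `0`.
theorem sum_antidiagonal_neg_one_pow_mul_choose_succ_mul_pow {R : Type*} [CommRing R] {M : ℕ}
    (hM : M ≠ 0) :
    ∑ p ∈ antidiagonal M, (-1 : R) ^ p.2 * (M + 1).choose (p.1 + 1) * ((p.1 : R) + 1) ^ M = 0 := by
  have h := congrFun (fwdDiff_iter_pow_eq_zero_of_lt (R := R) (Nat.lt_succ_self M)) 0
  rw [fwdDiff_iter_eq_sum_shift, ← Nat.sum_antidiagonal_eq_sum_range_succ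
    (fun j l => ((-1 : ℤ) ^ l * (M + 1).choose j) • (0 + j • (1 : R)) ^ M),
    Nat.sum_antidiagonal_succ] at h
  simpa [hM] using h

theorem HasSum.sum_antidiagonal {A α : Type*} [AddCommMonoid A] [HasAntidiagonal A]
    [AddCommMonoid α] [TopologicalSpace α] [ContinuousAdd α] [RegularSpace α]
    {f : A × A → α} {a : α} (h : HasSum f a) :
    HasSum (fun n => ∑ p ∈ antidiagonal n, f p) a :=
  (HasAntidiagonal.sigmaAntidiagonalEquivProd.hasSum_iff.mpr h).sigma fun _ =>
    Finset.hasSum _ f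

theorem FormalMultilinearSeries.analyticAt_ofScalarsSum_of_bound {𝕜 : Type*}
    [NontriviallyNormedField 𝕜] [CompleteSpace 𝕜] {c : ℕ → 𝕜} {r : ℝ≥0} (C : ℝ)
    (hc : ∀ n, ‖c n‖ * (r : ℝ) ^ n ≤ C) {x : 𝕜} (hx : ‖x‖ < r) :
    AnalyticAt 𝕜 (ofScalarsSum c) x := by
  have hr : (r : ENNReal) ≤ (ofScalars 𝕜 c).radius :=
    (ofScalars 𝕜 c).le_radius_of_bound C fun n => by rw [ofScalars_norm]; exact hc n
  have hx' : x ∈ Metric.eball 0 (ofScalars 𝕜 c).radius := by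
    rw [Metric.mem_eball, edist_zero_right]
    exact lt_of_lt_of_le (by exact_mod_cast hx) hr
  exact ((ofScalars 𝕜 c).hasFPowerSeriesOnBall (pos_of_gt hx')).analyticAt_of_mem hx'

theorem mul_exp_neg_lt_exp_neg_one {s : ℝ} (hs : s ≠ 1) : s * exp (-s) < exp (-1) := by
  have h : s < exp (s - 1) := by simpa using add_one_lt_exp (sub_ne_zero.mpr hs)
  calc s * exp (-s) < exp (s - 1) * exp (-s) := by gcongr
    _ = exp (-1) := by rw [← exp_add]; ring_nf

noncomputable def treeCoeff (n : ℕ) : ℝ := (n + 1) ^ n / (n + 1)!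

theorem treeCoeff_nonneg (n : ℕ) : 0 ≤ treeCoeff n := by
  unfold treeCoeff; positivity

theorem treeCoeff_le_exp (n : ℕ) : treeCoeff n ≤ exp (n + 1) := by
  calc treeCoeff n ≤ ((n + 1 : ℕ) : ℝ) ^ (n + 1) / (n + 1)! := by
        unfold treeCoeff; push_cast; gcongr
        · linarith
        · omega
    _ ≤ exp (n + 1) := by
        exact_mod_cast Real.pow_div_factorial_le_exp _ (Nat.cast_nonneg (n + 1)) (n + 1)

theorem treeCoeff_mul_pow_le (n : ℕ) {y : ℝ} (hy : 0 ≤ y) :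
    treeCoeff n * y ^ n ≤ exp 1 * (exp 1 * y) ^ n := by
  calc treeCoeff n * y ^ n ≤ exp (n + 1) * y ^ n := by gcongr; exact treeCoeff_le_exp n
    _ = exp 1 * (exp 1 * y) ^ n := by rw [mul_pow, ← exp_nat_mul, exp_add]; ring_nf

theorem summable_treeCoeff_mul_pow_succ {y : ℝ} (hy0 : 0 ≤ y) (hy : y < exp (-1)) :
    Summable fun n => treeCoeff n * y ^ (n + 1) := by
  have hq : exp 1 * y < 1 := by
    simpa [← exp_add] using mul_lt_mul_of_pos_left hy (exp_pos 1)
  refine .of_nonneg_of_le (fun n => by positivity [treeCoeff_nonneg n]) (fun n => ?_)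
    ((summable_geometric_of_lt_one (by positivity) hq).mul_left (exp 1 * y))
  calc treeCoeff n * y ^ (n + 1) = treeCoeff n * y ^ n * y := by ring
    _ ≤ exp 1 * (exp 1 * y) ^ n * y := mul_le_mul_of_nonneg_right (treeCoeff_mul_pow_le n hy0) hy0
    _ = exp 1 * y * (exp 1 * y) ^ n := by ring

-- `x` and `y` are kept apart so that `treeTerm t (-t)`, the expansion of `T(t e^{-t})`, is
-- dominated by `treeTerm |t| |t|`.
noncomputable def treeTerm (x y : ℝ) (p : ℕ × ℕ) : ℝ :=
  treeCoeff p.1 * x ^ (p.1 + 1) * ((p.1 + 1) * y) ^ p.2 / p.2 !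

theorem hasSum_treeTerm (x y : ℝ) (n : ℕ) :
    HasSum (fun k => treeTerm x y (n, k)) (treeCoeff n * (x * exp y) ^ (n + 1)) := by
  have h := (NormedSpace.expSeries_div_hasSum_exp (((n : ℝ) + 1) * y)).mul_left
    (treeCoeff n * x ^ (n + 1))
  rw [← Real.exp_eq_exp_ℝ] at h
  have hexp : exp (((n : ℝ) + 1) * y) = exp y ^ (n + 1) := by
    rw [← exp_nat_mul]; push_cast; ring_nf
  rw [hexp, mul_assoc, ← mul_pow] at h
  simpa only [treeTerm, mul_div_assoc] using h

theorem abs_treeTerm (x y : ℝ) (p : ℕ × ℕ) : |treeTerm x y p| = treeTerm |x| |y| p := by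
  simp only [treeTerm, abs_mul, abs_div, abs_pow, abs_of_nonneg (treeCoeff_nonneg _), Nat.abs_cast]
  rw [abs_of_nonneg (by positivity : (0 : ℝ) ≤ p.1 + 1)]

theorem summable_treeTerm {x y : ℝ} (h : |x| * exp |y| < exp (-1)) : Summable (treeTerm x y) := by
  have hnonneg : 0 ≤ treeTerm |x| |y| := fun p => abs_treeTerm x y p ▸ abs_nonneg _
  rw [← summable_abs_iff]
  simp only [abs_treeTerm]
  refine (summable_prod_of_nonneg hnonneg).mpr ⟨fun n => (hasSum_treeTerm _ _ n).summable, ?_⟩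
  simpa only [(hasSum_treeTerm _ _ _).tsum_eq] using
    summable_treeCoeff_mul_pow_succ (by positivity) h

theorem treeTerm_neg (t : ℝ) (i k : ℕ) :
    treeTerm t (-t) (i, k) = t ^ (i + k + 1) / (i + k + 1)! *
      ((-1) ^ k * (i + k + 1).choose (i + 1) * ((i : ℝ) + 1) ^ (i + k)) := by
  rw [treeTerm, treeCoeff, Nat.cast_choose ℝ (by omega : i + 1 ≤ i + k + 1),
    show i + k + 1 - (i + 1) = k by omega, mul_neg, neg_eq_neg_one_mul, mul_pow, mul_pow]
  field_simp
  ring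

theorem sum_antidiagonal_treeTerm_neg (t : ℝ) (M : ℕ) :
    ∑ p ∈ antidiagonal M, treeTerm t (-t) p = if M = 0 then t else 0 := by
  rcases eq_or_ne M 0 with rfl | hM
  · simp [treeTerm, treeCoeff]
  · rw [if_neg hM, ← mul_zero (t ^ (M + 1) / (M + 1)!),
      ← sum_antidiagonal_neg_one_pow_mul_choose_succ_mul_pow hM, mul_sum]
    refine sum_congr rfl fun p hp => ?_
    rw [HasAntidiagonal.mem_antidiagonal] at hp
    rw [← hp, treeTerm_neg]

noncomputable def treeFunction (x : ℝ) : ℝ := ∑' n, treeCoeff n * x ^ (n + 1)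

theorem treeFunction_eq_mul_ofScalarsSum :
    treeFunction = fun x => x * FormalMultilinearSeries.ofScalarsSum treeCoeff x := by
  funext x
  rw [FormalMultilinearSeries.ofScalars_sum_eq, ← tsum_mul_left, treeFunction]
  exact tsum_congr fun n => by rw [smul_eq_mul, pow_succ]; ring

theorem analyticAt_treeFunction {x : ℝ} (hx : |x| < exp (-1)) : AnalyticAt ℝ treeFunction x := by
  rw [treeFunction_eq_mul_ofScalarsSum]
  refine analyticAt_id.mul (FormalMultilinearSeries.analyticAt_ofScalarsSum_of_bound
    (r := ⟨exp (-1), (exp_pos _).le⟩) (exp 1) (fun n => ?_) hx)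
  change ‖treeCoeff n‖ * exp (-1) ^ n ≤ exp 1
  rw [Real.norm_of_nonneg (treeCoeff_nonneg n)]
  simpa [← exp_add] using treeCoeff_mul_pow_le n (exp_pos (-1)).le

theorem treeFunction_mul_exp_neg_of_abs_mul_exp_abs_lt {t : ℝ} (ht : |t| * exp |t| < exp (-1)) :
    treeFunction (t * exp (-t)) = t := by
  have hsum := (summable_treeTerm (x := t) (y := -t) (by rwa [abs_neg])).hasSum
  have htsum : ∑' p, treeTerm t (-t) p = t := by
    refine hsum.sum_antidiagonal.unique ?_
    simpa only [sum_antidiagonal_treeTerm_neg] using hasSum_ite_eq 0 t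
  rw [htsum] at hsum
  exact (hsum.prod_fiberwise (hasSum_treeTerm t (-t))).tsum_eq

theorem treeFunction_mul_exp_neg {t : ℝ} (ht0 : 0 ≤ t) (ht1 : t < 1) :
    treeFunction (t * exp (-t)) = t := by
  have hsmall : ∀ᶠ s in 𝓝 (0 : ℝ), |s| * exp |s| < exp (-1) := by
    have hcont : Continuous fun s : ℝ => |s| * exp |s| := by fun_prop
    exact hcont.tendsto' 0 0 (by simp) |>.eventually (gt_mem_nhds (exp_pos (-1)))
  obtain ⟨δ, hδ, hball⟩ := Metric.eventually_nhds_iff.mp hsmall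
  have hU : ∀ s ∈ Set.Ioo (-δ) 1, |s * exp (-s)| < exp (-1) := by
    rintro s ⟨hδs, hs1⟩
    rcases lt_or_ge s 0 with hs0 | hs0
    · have := hball (show dist s 0 < δ by
        rw [dist_zero_right, Real.norm_eq_abs, abs_of_neg hs0]; linarith)
      rwa [abs_mul, abs_of_pos (exp_pos _), ← abs_of_neg hs0]
    · rw [abs_of_nonneg (by positivity)]
      exact mul_exp_neg_lt_exp_neg_one hs1.ne
  have hanalytic : AnalyticOnNhd ℝ (fun s => treeFunction (s * exp (-s))) (Set.Ioo (-δ) 1) :=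
    fun s hs =>
      (analyticAt_treeFunction (hU s hs)).comp (f := fun s => s * exp (-s)) (by fun_prop)
  refine hanalytic.eqOn_of_preconnected_of_eventuallyEq analyticOnNhd_id isPreconnected_Ioo
    ⟨neg_lt_zero.mpr hδ, one_pos⟩ ?_ ⟨by linarith, ht1⟩
  filter_upwards [hsmall] with s hs using treeFunction_mul_exp_neg_of_abs_mul_exp_abs_lt hs

/-- The tree-function identity `∑_{n=1}^∞ n^{n-1} (t e^{-t})^n / n! = t`
for `0 ≤ t < 1`. -/
theorem tree_function_identity (t : ℝ) (ht0 : 0 ≤ t) (ht1 : t < 1) :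
    ∑' n : ℕ, ((n : ℝ) + 1) ^ n * (t * Real.exp (-t)) ^ (n + 1)
        / (Nat.factorial (n + 1) : ℝ) = t := by
  calc _ = treeFunction (t * exp (-t)) := tsum_congr fun n => by rw [treeCoeff]; ring
    _ = t := treeFunction_mul_exp_neg ht0 ht1
end

section
/- Let y > 0 be a real number and k an integer. For every real x with |x| < 1/e, the function T_{k+1}(·, y) : x ↦ ∑_{n=0}^∞ (y+n)^{n-k-1} x^n / n! is differentiable at x, and it satisfies the functional equation x · T_{k+1}'(x, y) + y · T_{k+1}(x, y) = T_k(x, y), where T_k(x,y) = ∑_{n=0}^∞ (y+n)^{n-k} x^n / n! and T_{k+1}' denotes the derivative with respect to x. -/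
private lemma kolberg_pow_le (n : ℕ) : (n:ℝ) ^ n ≤ Real.exp 1 ^ n * n.factorial := by
  have h : (n:ℝ) ^ n / n.factorial ≤ Real.exp n :=
    le_trans (Finset.single_le_sum (f := fun i => (n:ℝ) ^ i / i.factorial)
      (fun i _ => by positivity) (Finset.self_mem_range_succ n))
      (Real.sum_le_exp_of_nonneg (Nat.cast_nonneg n) (n+1))
  have hf : (0:ℝ) < n.factorial := by exact_mod_cast n.factorial_pos
  have h2 := (div_le_iff₀ hf).mp h
  have h3 : Real.exp n = Real.exp 1 ^ n := by
    rw [← Real.exp_nat_mul, mul_one]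
  calc (n:ℝ)^n ≤ Real.exp n * n.factorial := h2
    _ = Real.exp 1 ^ n * n.factorial := by rw [h3]

private lemma kolberg_summable (y : ℝ) (hy : 0 < y) (k : ℤ) (r : ℝ) (hr : 0 ≤ r)
    (hre : r < 1 / Real.exp 1) :
    Summable (fun n : ℕ => (y + n) ^ ((n:ℤ) - k) * r ^ n / (Nat.factorial n : ℝ)) := by
  have he : (0:ℝ) < Real.exp 1 := Real.exp_pos 1
  have her : Real.exp 1 * r < 1 := by
    have := (lt_div_iff₀ he).mp hre
    calc Real.exp 1 * r = r * Real.exp 1 := mul_comm _ _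
      _ < 1 := this
  set m := k.natAbs with hm
  set C := max (y ^ (-k)) ((y + 1) ^ m) with hC
  have hC0 : 0 < C := lt_of_lt_of_le (zpow_pos hy _) (le_max_left _ _)
  have hgeom : Summable (fun n : ℕ => Real.exp y * C * ((n:ℝ) ^ m * (Real.exp 1 * r) ^ n)) := by
    apply Summable.mul_left
    exact summable_pow_mul_geometric_of_norm_lt_one m (by
      rw [Real.norm_eq_abs, abs_of_nonneg (by positivity)]; exact her)
  rw [← summable_nat_add_iff 1]
  refine Summable.of_nonneg_of_le (fun n => ?_) (fun n => ?_) ((summable_nat_add_iff 1).2 hgeom)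
  · have hb : (0:ℝ) < y + ((n+1:ℕ):ℝ) := add_pos_of_pos_of_nonneg hy (Nat.cast_nonneg _)
    exact div_nonneg (mul_nonneg (zpow_nonneg hb.le _) (pow_nonneg hr _)) (Nat.cast_nonneg _)
  · set N := n + 1 with hN
    have hN1 : (1:ℝ) ≤ (N:ℝ) := by exact_mod_cast Nat.one_le_iff_ne_zero.2 (by omega)
    have hNpos : (0:ℝ) < N := lt_of_lt_of_le one_pos hN1
    have hb : (0:ℝ) < y + (N:ℝ) := add_pos_of_pos_of_nonneg hy (Nat.cast_nonneg _)
    have hA : (y + (N:ℝ)) ^ (N:ℕ) ≤ Real.exp y * (Real.exp 1 ^ (N:ℕ) * N.factorial) := by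
      have h1 : y + (N:ℝ) ≤ N * Real.exp (y / N) := by
        have h0 := Real.add_one_le_exp (y / N)
        calc y + (N:ℝ) = N * (y / N + 1) := by field_simp
          _ ≤ N * Real.exp (y / N) := mul_le_mul_of_nonneg_left h0 (by positivity)
      calc (y + (N:ℝ)) ^ (N:ℕ) ≤ ((N:ℝ) * Real.exp (y / N)) ^ (N:ℕ) :=
            pow_le_pow_left₀ hb.le h1 _
        _ = (N:ℝ) ^ (N:ℕ) * Real.exp y := by
            rw [mul_pow, ← Real.exp_nat_mul, mul_div_cancel₀ _ (ne_of_gt hNpos)]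
        _ ≤ Real.exp 1 ^ (N:ℕ) * N.factorial * Real.exp y :=
            mul_le_mul_of_nonneg_right (kolberg_pow_le N) (Real.exp_pos _).le
        _ = Real.exp y * (Real.exp 1 ^ (N:ℕ) * N.factorial) := by ring
    have hB : (y + (N:ℝ)) ^ (-k) ≤ C * (N:ℝ) ^ m := by
      rcases le_or_gt 0 k with hk | hk
      · obtain ⟨j, rfl⟩ := Int.eq_ofNat_of_zero_le hk
        have h1 : y ^ (j:ℕ) ≤ (y + (N:ℝ)) ^ (j:ℕ) :=
          pow_le_pow_left₀ hy.le (by linarith) _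
        have h2 : (y + (N:ℝ)) ^ (-(j:ℤ)) ≤ y ^ (-(j:ℤ)) := by
          rw [zpow_neg, zpow_neg, zpow_natCast, zpow_natCast]
          exact inv_anti₀ (pow_pos hy _) h1
        calc (y + (N:ℝ)) ^ (-(j:ℤ)) ≤ y ^ (-(j:ℤ)) := h2
          _ ≤ C := le_max_left _ _
          _ = C * 1 := (mul_one _).symm
          _ ≤ C * (N:ℝ) ^ m := mul_le_mul_of_nonneg_left (one_le_pow₀ hN1) hC0.le
      · have hmk : -k = (m : ℤ) := by omega
        rw [hmk, zpow_natCast]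
        calc (y + (N:ℝ)) ^ m ≤ ((y + 1) * N) ^ m := by
              apply pow_le_pow_left₀ hb.le
              nlinarith
          _ = (y + 1) ^ m * (N:ℝ) ^ m := mul_pow _ _ _
          _ ≤ C * (N:ℝ) ^ m :=
              mul_le_mul_of_nonneg_right (le_max_right _ _) (by positivity)
    have hfac : (0:ℝ) < N.factorial := by exact_mod_cast N.factorial_pos
    have hAB : (y + (N:ℝ)) ^ (N:ℕ) * (y + (N:ℝ)) ^ (-k)
        ≤ (Real.exp y * (Real.exp 1 ^ (N:ℕ) * N.factorial)) * (C * (N:ℝ) ^ m) :=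
      mul_le_mul hA hB (zpow_nonneg hb.le _) (by positivity)
    calc (y + (N:ℝ)) ^ ((N:ℤ) - k) * r ^ (N:ℕ) / N.factorial
        = ((y + (N:ℝ)) ^ (N:ℕ) * (y + (N:ℝ)) ^ (-k)) * r ^ (N:ℕ) / N.factorial := by
          rw [sub_eq_add_neg, zpow_add₀ hb.ne', zpow_natCast]
      _ ≤ ((Real.exp y * (Real.exp 1 ^ (N:ℕ) * N.factorial)) * (C * (N:ℝ)^m)) * r ^ (N:ℕ)
            / N.factorial :=
          (div_le_div_iff_of_pos_right hfac).mpr (mul_le_mul_of_nonneg_right hAB (pow_nonneg hr _))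
      _ = Real.exp y * C * ((N:ℝ) ^ m * (Real.exp 1 * r) ^ (N:ℕ)) := by
          rw [mul_pow]; field_simp

/-- For `y > 0`, `k : ℤ` and `|x| < 1/e`, the function
`T_{k+1}(·,y) : x ↦ ∑ (y+n)^{n-k-1} x^n / n!` is differentiable at `x` and
satisfies `x · T_{k+1}'(x,y) + y · T_{k+1}(x,y) = T_k(x,y)`. -/
theorem kolberg_functional_equation (y : ℝ) (hy : 0 < y) (k : ℤ)
    (x : ℝ) (hx : |x| < 1 / Real.exp 1) :
    DifferentiableAt ℝ
        (fun z : ℝ => ∑' n : ℕ,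
          (y + n) ^ ((n : ℤ) - (k + 1)) * z ^ n / (Nat.factorial n : ℝ)) x
    ∧ x * deriv
        (fun z : ℝ => ∑' n : ℕ,
          (y + n) ^ ((n : ℤ) - (k + 1)) * z ^ n / (Nat.factorial n : ℝ)) x
      + y * (∑' n : ℕ, (y + n) ^ ((n : ℤ) - (k + 1)) * x ^ n / (Nat.factorial n : ℝ))
      = ∑' n : ℕ, (y + n) ^ ((n : ℤ) - k) * x ^ n / (Nat.factorial n : ℝ) := by
  have he : (0:ℝ) < Real.exp 1 := Real.exp_pos 1
  set c : ℕ → ℝ := fun n => (y + n) ^ ((n:ℤ) - (k+1)) / (Nat.factorial n : ℝ) with hc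
  have hpos : ∀ n : ℕ, (0:ℝ) < y + n := fun n => add_pos_of_pos_of_nonneg hy (Nat.cast_nonneg n)
  have hcpos : ∀ n, 0 < c n := fun n =>
    div_pos (zpow_pos (hpos n) _) (by exact_mod_cast n.factorial_pos)
  have hfun : (fun z : ℝ => ∑' n : ℕ, (y + n) ^ ((n:ℤ) - (k+1)) * z ^ n / (Nat.factorial n : ℝ))
      = fun z : ℝ => ∑' n : ℕ, c n * z ^ n := by
    funext z; exact tsum_congr fun n => (mul_div_right_comm _ _ _)
  rw [hfun]
  set r : ℝ := (|x| + 1 / Real.exp 1) / 2 with hrdef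
  have hxr : |x| < r := by rw [hrdef]; linarith
  have hr0 : 0 < r := lt_of_le_of_lt (abs_nonneg x) hxr
  have hre : r < 1 / Real.exp 1 := by rw [hrdef]; linarith
  have hu : Summable (fun n : ℕ =>
      (1/r) * ((y + n) ^ ((n:ℤ) - k) * r ^ n / (Nat.factorial n : ℝ))) :=
    (kolberg_summable y hy k r hr0.le hre).mul_left _
  have key : ∀ (n : ℕ) (z : ℝ), |z| ≤ r →
      |c n * ((n:ℝ) * z ^ (n-1))|
        ≤ (1/r) * ((y + n) ^ ((n:ℤ) - k) * r ^ n / (Nat.factorial n : ℝ)) := by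
    intro n z hz
    have hb := hpos n
    rcases n with _ | m
    · simp only [Nat.cast_zero, zero_mul, mul_zero, abs_zero]
      have : (0:ℝ) ≤ (y + ((0:ℕ):ℝ)) ^ ((0:ℤ) - k) * r ^ 0 / (Nat.factorial 0 : ℝ) :=
        div_nonneg (mul_nonneg (zpow_nonneg (hpos 0).le _) (pow_nonneg hr0.le _))
          (Nat.cast_nonneg _)
      positivity
    · set N := m + 1 with hN
      have hfac : (0:ℝ) < N.factorial := by exact_mod_cast N.factorial_pos
      have habs : |c N * ((N:ℝ) * z ^ (N-1))| = c N * ((N:ℝ) * |z| ^ m) := by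
        rw [abs_mul, abs_of_pos (hcpos N), abs_mul, abs_pow, Nat.abs_cast]
        simp [hN]
      have hzm : |z| ^ m ≤ r ^ m := pow_le_pow_left₀ (abs_nonneg z) hz m
      have hcn : c N * (N:ℝ) ≤ (y + (N:ℝ)) ^ ((N:ℤ) - k) / N.factorial := by
        have h1 : (N:ℝ) ≤ y + N := by
          have := hy.le; linarith [Nat.cast_nonneg (α := ℝ) N]
        have h2 : (y + (N:ℝ)) ^ ((N:ℤ) - (k+1)) * (N:ℝ)
            ≤ (y + (N:ℝ)) ^ ((N:ℤ) - (k+1)) * (y + N) :=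
          mul_le_mul_of_nonneg_left h1 (zpow_nonneg (hpos N).le _)
        have h3 : (y + (N:ℝ)) ^ ((N:ℤ) - (k+1)) * (y + (N:ℝ))
            = (y + (N:ℝ)) ^ ((N:ℤ) - k) := by
          rw [← zpow_add_one₀ (hpos N).ne']
          congr 1; ring
        calc c N * (N:ℝ) = (y + (N:ℝ)) ^ ((N:ℤ) - (k+1)) * (N:ℝ) / N.factorial := by
              rw [hc]; ring
          _ ≤ (y + (N:ℝ)) ^ ((N:ℤ) - (k+1)) * (y + (N:ℝ)) / N.factorial :=
              (div_le_div_iff_of_pos_right hfac).mpr h2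
          _ = (y + (N:ℝ)) ^ ((N:ℤ) - k) / N.factorial := by rw [h3]
      calc |c N * ((N:ℝ) * z ^ (N-1))| = c N * (N:ℝ) * |z| ^ m := by rw [habs]; ring
        _ ≤ ((y + (N:ℝ)) ^ ((N:ℤ) - k) / N.factorial) * r ^ m := by
            apply mul_le_mul hcn hzm (pow_nonneg (abs_nonneg z) m)
            exact div_nonneg (zpow_nonneg (hpos N).le _) hfac.le
        _ = (1/r) * ((y + (N:ℝ)) ^ ((N:ℤ) - k) * r ^ (N:ℕ) / N.factorial) := by
            rw [hN, pow_succ]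
            field_simp
  have hder : HasDerivAt (fun z : ℝ => ∑' n : ℕ, c n * z ^ n)
      (∑' n : ℕ, c n * ((n:ℝ) * x ^ (n-1))) x := by
    have hf0 : Summable (fun n : ℕ => c n * (0:ℝ) ^ n) :=
      summable_of_ne_finset_zero (s := {0}) (fun b hb => by
        simp only [Finset.mem_singleton] at hb
        simp [zero_pow hb])
    exact hasDerivAt_tsum_of_isPreconnected (t := Set.Ioo (-r) r) (y₀ := (0:ℝ))
      hu isOpen_Ioo (convex_Ioo (-r) r).isPreconnected
      (fun n z _ => HasDerivAt.const_mul (c n) (hasDerivAt_pow n z))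
      (fun n z hzm => by
        rw [Real.norm_eq_abs]
        exact key n z (abs_le.mpr ⟨hzm.1.le, hzm.2.le⟩))
      ⟨neg_lt_zero.mpr hr0, hr0⟩ hf0 ⟨(abs_lt.mp hxr).1, (abs_lt.mp hxr).2⟩
  refine ⟨hder.differentiableAt, ?_⟩
  rw [hder.deriv]
  have h2 : (∑' n : ℕ, (y + n) ^ ((n:ℤ) - (k+1)) * x ^ n / (Nat.factorial n : ℝ))
      = ∑' n : ℕ, c n * x ^ n := tsum_congr fun n => (mul_div_right_comm _ _ _)
  rw [h2]
  have S1 : Summable (fun n : ℕ => x * (c n * ((n:ℝ) * x ^ (n-1)))) := by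
    apply Summable.of_abs
    refine Summable.of_nonneg_of_le (fun n => abs_nonneg _) (fun n => ?_) (hu.mul_left r)
    rw [abs_mul]
    exact mul_le_mul hxr.le (key n x hxr.le) (abs_nonneg _) hr0.le
  have hu2 : Summable (fun n : ℕ =>
      y * ((y + n) ^ ((n:ℤ) - (k+1)) * r ^ n / (Nat.factorial n : ℝ))) :=
    (kolberg_summable y hy (k+1) r hr0.le hre).mul_left _
  have S2 : Summable (fun n : ℕ => y * (c n * x ^ n)) := by
    apply Summable.of_abs
    refine Summable.of_nonneg_of_le (fun n => abs_nonneg _) (fun n => ?_) hu2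
    rw [abs_mul, abs_mul, abs_of_pos hy, abs_of_pos (hcpos n), abs_pow]
    apply mul_le_mul_of_nonneg_left _ hy.le
    rw [hc, mul_div_right_comm]
    exact mul_le_mul_of_nonneg_left
      (pow_le_pow_left₀ (abs_nonneg x) hxr.le n)
      (div_nonneg (zpow_nonneg (hpos n).le _) (Nat.cast_nonneg _))
  rw [← tsum_mul_left, ← tsum_mul_left, ← Summable.tsum_add S1 S2]
  refine tsum_congr fun n => ?_
  rcases n with _ | m
  · simp only [hc, Nat.cast_zero, zero_mul, mul_zero, zero_add, pow_zero, mul_one,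
      Nat.factorial_zero, Nat.cast_one, div_one, add_zero]
    rw [mul_comm, ← zpow_add_one₀ hy.ne']
    congr 1; ring
  · have h3 : (y + ((m+1:ℕ):ℝ)) ^ (((m+1:ℕ):ℤ) - (k+1)) * (y + ((m+1:ℕ):ℝ))
        = (y + ((m+1:ℕ):ℝ)) ^ (((m+1:ℕ):ℤ) - k) := by
      rw [← zpow_add_one₀ (hpos (m+1)).ne']
      congr 1; ring
    have hfac : ((Nat.factorial (m+1) : ℝ)) ≠ 0 := by
      exact_mod_cast (Nat.factorial_pos (m+1)).ne'
    simp only [hc, Nat.add_sub_cancel]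
    rw [← h3]
    field_simp
    ring
end
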